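/- A graph G with at least one vertex is (P_3 + P_1)-free if and only if G can be written as a join G = H_1 ∨ H_2 ∨ ⋯ ∨ H_n where for each i, either the independence number of H_i is at most 2 or H_i is a disjoint union of cliques. -/

import Mathlib

/-!
`G` is `(P_3 + P_1)`-free exactly when `Gᶜ` is paw-free: no vertex sees exactly one vertex of a
triangle. The parts of the join are the connected components of `Gᶜ`. In a paw-free graph every
vertex of a component containing a triangle lies on a triangle, and a vertex that misses a
triangle vertex `y` sees the other two; hence any two vertices missing `y` have a common
neighbour with `y`. Back in `G`: a part containing an independent triple contains no induced
`P_3`, as that common neighbour would be the isolated vertex of a `P_3 + P_1`. Conversely, the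
isolated vertex of an induced `P_3 + P_1` forces all four vertices into one part, which then
contains both an independent triple and an induced `P_3`.
-/

open SimpleGraph

/-- `G` is `k`-vertex-critical: `χ(G) = k` and deleting any vertex decreases `χ`. -/
def IsKVertexCritical {V : Type*} (G : SimpleGraph V) (k : ℕ) : Prop :=
  G.chromaticNumber = k ∧ ∀ v : V, (G.induce ({v}ᶜ : Set V)).chromaticNumber < k

/-- `G` has no induced subgraph isomorphic to `H`. -/
def InducedFree {V W : Type*} (G : SimpleGraph V) (H : SimpleGraph W) : Prop :=
  ∀ s : Set V, IsEmpty (G.induce s ≃g H)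

/-- `s` is an independent set of `G`. -/
def IsIndepSet {V : Type*} (G : SimpleGraph V) (s : Set V) : Prop :=
  s.Pairwise fun a b => ¬ G.Adj a b

/-- The graph `P_2 + ℓ P_1`: an edge together with `ℓ` isolated vertices. -/
def P2lP1 (ℓ : ℕ) : SimpleGraph (Fin (ℓ + 2)) := fromEdgeSet {s(0, 1)}

/-- The graph `P_3 + P_1`: a path on three vertices plus an isolated vertex. -/
def P3P1 : SimpleGraph (Fin 4) := fromEdgeSet {s(0, 1), s(1, 2)}

/-- The paw: a triangle with a pendant vertex. -/
def paw : SimpleGraph (Fin 4) := fromEdgeSet {s(0, 1), s(0, 2), s(1, 2), s(2, 3)}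

/-- The join of two graphs: all edges between the two sides are added. -/
def joinG {α β : Type*} (G : SimpleGraph α) (H : SimpleGraph β) : SimpleGraph (α ⊕ β) where
  Adj x y :=
    match x, y with
    | Sum.inl a, Sum.inl b => G.Adj a b
    | Sum.inr a, Sum.inr b => H.Adj a b
    | Sum.inl _, Sum.inr _ => True
    | Sum.inr _, Sum.inl _ => True
  symm := ⟨by
    rintro (a | a) (b | b) h
    · exact G.adj_symm h
    · trivial
    · trivial
    · exact H.adj_symm h⟩
  loopless := ⟨by
    rintro (a | a) h
    · exact G.irrefl h
    · exact H.irrefl h⟩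

namespace SimpleGraph

variable {V W : Type*} {G : SimpleGraph V}

theorem not_compl_adj_of_adj {x y : V} (h : G.Adj x y) : ¬ Gᶜ.Adj x y :=
  fun hc => hc.2 h

theorem adj_of_not_compl_adj {x y : V} (hne : x ≠ y) (h : ¬ Gᶜ.Adj x y) : G.Adj x y :=
  not_not.1 fun hn => h ⟨hne, hn⟩

theorem inducedFree_iff_not_isIndContained {H : SimpleGraph W} :
    InducedFree G H ↔ ¬ H ⊴ G := by
  simp only [InducedFree, isIndContained_iff_exists_iso_induce, not_exists, not_nonempty_iff]
  exact forall_congr' fun s =>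
    ⟨fun h => ⟨fun e => h.false e.symm⟩, fun h => ⟨fun e => h.false e.symm⟩⟩

theorem isIndContained_of_adj_of_compl_adj {H : SimpleGraph W} (v : W → V)
    (hadj : ∀ ⦃i j⦄, H.Adj i j → G.Adj (v i) (v j))
    (hcompl : ∀ ⦃i j⦄, Hᶜ.Adj i j → Gᶜ.Adj (v i) (v j)) : H ⊴ G := by
  have hinj : Function.Injective v := fun i j hv => by_contra fun hij => by
    by_cases h : H.Adj i j
    · exact (hadj h).ne hv
    · exact (hcompl ⟨hij, h⟩).ne hv
  refine ⟨⟨⟨v, hinj⟩, fun {i j} => ⟨fun h => ?_, (hadj ·)⟩⟩⟩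
  exact adj_of_not_compl_adj (fun hij => G.irrefl (hij ▸ h))
    fun hc => not_compl_adj_of_adj h (hcompl hc)

instance : DecidableRel P3P1.Adj := fun i j =>
  decidable_of_iff (s(i, j) ∈ ({s(0, 1), s(1, 2)} : Finset (Sym2 (Fin 4))) ∧ i ≠ j) (by
    simp [P3P1])

theorem P3P1_isIndContained_iff :
    P3P1 ⊴ G ↔ ∃ x y z w, G.Adj x y ∧ G.Adj y z ∧ Gᶜ.Adj x z ∧
      Gᶜ.Adj w x ∧ Gᶜ.Adj w y ∧ Gᶜ.Adj w z := by
  constructor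
  · rintro ⟨φ⟩
    have hadj {i j} (h : P3P1.Adj i j) : G.Adj (φ i) (φ j) := φ.map_adj_iff.2 h
    have hcompl {i j} (h : P3P1ᶜ.Adj i j) : Gᶜ.Adj (φ i) (φ j) :=
      (Embedding.complEquiv φ).map_adj_iff.2 h
    exact ⟨φ 0, φ 1, φ 2, φ 3, hadj (by decide), hadj (by decide), hcompl (by decide),
      hcompl (by decide), hcompl (by decide), hcompl (by decide)⟩
  · rintro ⟨x, y, z, w, hxy, hyz, hxz, hwx, hwy, hwz⟩
    refine isIndContained_of_adj_of_compl_adj ![x, y, z, w] (fun i j h => ?_) (fun i j h => ?_)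
    · fin_cases i <;> fin_cases j <;> revert h <;> simp +decide [hxy, hyz, hxy.symm, hyz.symm]
    · fin_cases i <;> fin_cases j <;> revert h <;>
        simp +decide [hxz, hwx, hwy, hwz, hxz.symm, hwx.symm, hwy.symm, hwz.symm]

/-- Equivalently, `H` has no induced paw. -/
def IsPawFree (H : SimpleGraph V) : Prop :=
  ∀ ⦃a b c t⦄, H.Adj a b → H.Adj a c → H.Adj b c → H.Adj t a → H.Adj t b ∨ H.Adj t c

namespace IsPawFree

variable {H : SimpleGraph V} {a b c : V}

theorem exists_triangle_of_adj (hH : H.IsPawFree) {y : V} (hab : H.Adj a b)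
    (hac : H.Adj a c) (hbc : H.Adj b c) (hya : H.Adj y a) :
    ∃ p q, H.Adj y p ∧ H.Adj y q ∧ H.Adj p q :=
  (hH hab hac hbc hya).elim (fun hyb => ⟨a, b, hya, hyb, hab⟩)
    (fun hyc => ⟨a, c, hya, hyc, hac⟩)

theorem adj_triangle_of_adj_of_adj (hH : H.IsPawFree) {s t : V} (hab : H.Adj a b)
    (hac : H.Adj a c) (hbc : H.Adj b c) (hsa : H.Adj s a) (hts : H.Adj t s) :
    H.Adj t a ∨ H.Adj t b ∨ H.Adj t c := by
  rcases hH hab hac hbc hsa with hsb | hsc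
  · have := hH hsa hsb hab hts; tauto
  · have := hH hsa hsc hac hts; tauto

theorem eq_or_adj_triangle_of_reachable (hH : H.IsPawFree) {t : V} (hab : H.Adj a b)
    (hac : H.Adj a c) (hbc : H.Adj b c) (ht : H.Reachable t a) :
    t = a ∨ H.Adj t a ∨ H.Adj t b ∨ H.Adj t c := by
  obtain ⟨p⟩ := ht
  induction p with
  | nil => exact .inl rfl
  | cons hts _ ih =>
    rcases ih hab hac with rfl | hsa | hsb | hsc
    · exact .inr (.inl hts)
    · exact .inr (hH.adj_triangle_of_adj_of_adj hab hac hbc hsa hts)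
    · have := hH.adj_triangle_of_adj_of_adj hab.symm hbc hac hsb hts; tauto
    · have := hH.adj_triangle_of_adj_of_adj hac.symm hbc.symm hab hsc hts; tauto

theorem exists_triangle_of_reachable (hH : H.IsPawFree) {y : V} (hab : H.Adj a b)
    (hac : H.Adj a c) (hbc : H.Adj b c) (hy : H.Reachable y a) :
    ∃ p q, H.Adj y p ∧ H.Adj y q ∧ H.Adj p q := by
  rcases hH.eq_or_adj_triangle_of_reachable hab hac hbc hy with rfl | hya | hyb | hyc
  · exact ⟨b, c, hab, hac, hbc⟩
  · exact hH.exists_triangle_of_adj hab hac hbc hya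
  · exact hH.exists_triangle_of_adj hab.symm hbc hac hyb
  · exact hH.exists_triangle_of_adj hac.symm hbc.symm hab hyc

theorem adj_adj_of_reachable (hH : H.IsPawFree) {x : V} (hab : H.Adj a b)
    (hac : H.Adj a c) (hbc : H.Adj b c) (hx : H.Reachable x a) (hxa : x ≠ a)
    (hnxa : ¬ H.Adj x a) : H.Adj x b ∧ H.Adj x c := by
  rcases hH.eq_or_adj_triangle_of_reachable hab hac hbc hx with rfl | hxa' | hxb | hxc
  · exact absurd rfl hxa
  · exact absurd hxa' hnxa
  · exact ⟨hxb, (hH hab.symm hbc hac hxb).resolve_left hnxa⟩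
  · exact ⟨(hH hac.symm hbc.symm hab hxc).resolve_left hnxa, hxc⟩

theorem exists_common_neighbor (hH : H.IsPawFree) {x y z : V} (hab : H.Adj a b)
    (hac : H.Adj a c) (hbc : H.Adj b c)
    (hx : H.Reachable x a) (hy : H.Reachable y a) (hz : H.Reachable z a)
    (hxy : x ≠ y) (hnxy : ¬ H.Adj x y) (hzy : z ≠ y) (hnzy : ¬ H.Adj z y) :
    ∃ w, H.Adj w x ∧ H.Adj w y ∧ H.Adj w z := by
  obtain ⟨p, q, hyp, hyq, hpq⟩ := hH.exists_triangle_of_reachable hab hac hbc hy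
  have hxp := (hH.adj_adj_of_reachable hyp hyq hpq (hx.trans hy.symm) hxy hnxy).1
  have hzp := (hH.adj_adj_of_reachable hyp hyq hpq (hz.trans hy.symm) hzy hnzy).1
  exact ⟨p, hxp.symm, hyp.symm, hzp.symm⟩

end IsPawFree

theorem isPawFree_compl_of_not_P3P1_isIndContained (h : ¬ P3P1 ⊴ G) : Gᶜ.IsPawFree := by
  intro a b c t hab hac hbc hta
  by_contra! hn
  have htb : G.Adj t b := adj_of_not_compl_adj (by rintro rfl; exact hn.2 hbc) hn.1
  have htc : G.Adj t c := adj_of_not_compl_adj (by rintro rfl; exact hn.1 hbc.symm) hn.2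
  exact h (P3P1_isIndContained_iff.2 ⟨b, t, c, a, htb.symm, htc, hbc, hab, hta.symm, hac⟩)

theorem exists_compl_triangle_of_isIndepSet {s : Set V} (hs : _root_.IsIndepSet G s)
    (hcard : 2 < s.ncard) :
    ∃ a ∈ s, ∃ b ∈ s, ∃ c ∈ s, Gᶜ.Adj a b ∧ Gᶜ.Adj a c ∧ Gᶜ.Adj b c := by
  obtain ⟨a, b, c, ha, hb, hc, hab, hac, hbc⟩ :=
    (Set.two_lt_ncard_iff (Set.finite_of_ncard_pos (by omega))).1 hcard
  exact ⟨a, ha, b, hb, c, hc,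
    ⟨hab, hs ha hb hab⟩, ⟨hac, hs ha hc hac⟩, ⟨hbc, hs hb hc hbc⟩⟩

theorem adj_of_compl_connectedComponentMk_ne {x y : V}
    (h : Gᶜ.connectedComponentMk x ≠ Gᶜ.connectedComponentMk y) : G.Adj x y :=
  adj_of_not_compl_adj (by rintro rfl; exact h rfl)
    fun hc => h (ConnectedComponent.eq.2 hc.reachable)

theorem compl_connectedComponent_dichotomy (h : ¬ P3P1 ⊴ G) (C : Gᶜ.ConnectedComponent) :
    (∀ s ⊆ C.supp, _root_.IsIndepSet G s → s.ncard ≤ 2) ∨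
      ∀ x y z, x ∈ C.supp → y ∈ C.supp → z ∈ C.supp →
        G.Adj x y → G.Adj y z → x ≠ z → G.Adj x z := by
  refine or_iff_not_imp_left.2 fun hbig x y z hx hy hz hxy hyz hxz => ?_
  push Not at hbig
  obtain ⟨s, hsC, hs, hcard⟩ := hbig
  obtain ⟨a, ha, b, -, c, -, hab, hac, hbc⟩ := exists_compl_triangle_of_isIndepSet hs hcard
  have reach {u : V} (hu : u ∈ C.supp) : Gᶜ.Reachable u a :=
    ConnectedComponent.eq.1 (hu.trans (hsC ha).symm)
  by_contra hnxz
  obtain ⟨w, hwx, hwy, hwz⟩ :=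
    (isPawFree_compl_of_not_P3P1_isIndContained h).exists_common_neighbor hab hac hbc
      (reach hx) (reach hy) (reach hz) hxy.ne (not_compl_adj_of_adj hxy)
      hyz.ne' (not_compl_adj_of_adj hyz.symm)
  exact h (P3P1_isIndContained_iff.2 ⟨x, y, z, w, hxy, hyz, ⟨hxz, hnxz⟩, hwx, hwy, hwz⟩)

theorem not_P3P1_isIndContained_of_partition {ι : Type*} (f : V → ι)
    (hcross : ∀ x y, f x ≠ f y → G.Adj x y)
    (hparts : ∀ i, (∀ s ⊆ f ⁻¹' {i}, _root_.IsIndepSet G s → s.ncard ≤ 2) ∨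
      ∀ x y z, f x = i → f y = i → f z = i →
        G.Adj x y → G.Adj y z → x ≠ z → G.Adj x z) :
    ¬ P3P1 ⊴ G := by
  rw [P3P1_isIndContained_iff]
  rintro ⟨x, y, z, w, hxy, hyz, hxz, hwx, hwy, hwz⟩
  have hpart {v : V} (hv : Gᶜ.Adj w v) : f v = f w :=
    not_not.1 fun hne => not_compl_adj_of_adj (hcross w v (Ne.symm hne)) hv
  rcases hparts (f w) with hindep | htrans
  · have hsub : ({x, z, w} : Set V) ⊆ f ⁻¹' {f w} := by
      rintro v (rfl | rfl | rfl)
      exacts [hpart hwx, hpart hwz, rfl]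
    have hs : _root_.IsIndepSet G {x, z, w} := by
      simp [_root_.IsIndepSet, Set.pairwise_insert, hxz.2, hwx.2, hwz.2, G.adj_comm _ x,
        G.adj_comm _ w]
    have h3 : ({x, z, w} : Set V).ncard = 3 :=
      Set.ncard_eq_three.2 ⟨x, z, w, hxz.ne, hwx.ne', hwz.ne', rfl⟩
    have := hindep _ hsub hs
    omega
  · exact hxz.2 (htrans x y z (hpart hwx) (hpart hwy) (hpart hwz) hxy hyz hxz.ne)

end SimpleGraph

theorem P3P1_free_iff_join_decomposition_general {V : Type} [Fintype V]
    (G : SimpleGraph V) :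
    InducedFree G P3P1 ↔
      ∃ (n : ℕ) (f : V → Fin n), Function.Surjective f ∧
        (∀ x y : V, f x ≠ f y → G.Adj x y) ∧
        ∀ i : Fin n,
          (∀ s : Set V, s ⊆ f ⁻¹' {i} → _root_.IsIndepSet G s → s.ncard ≤ 2) ∨
          (∀ x y z : V, f x = i → f y = i → f z = i →
            G.Adj x y → G.Adj y z → x ≠ z → G.Adj x z) := by
  rw [inducedFree_iff_not_isIndContained]
  refine ⟨fun h => ?_, fun ⟨n, f, _, hcross, hparts⟩ =>
    not_P3P1_isIndContained_of_partition f hcross hparts⟩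
  obtain ⟨n, ⟨e⟩⟩ := Finite.exists_equiv_fin Gᶜ.ConnectedComponent
  have hmem (i : Fin n) (x : V) :
      e (Gᶜ.connectedComponentMk x) = i ↔ x ∈ (e.symm i).supp := by
    rw [ConnectedComponent.mem_supp_iff, Equiv.eq_symm_apply]
  refine ⟨n, e ∘ Gᶜ.connectedComponentMk, e.surjective.comp Quot.mk_surjective,
    fun x y hxy => adj_of_compl_connectedComponentMk_ne (ne_of_apply_ne e hxy), fun i => ?_⟩
  have hfiber : (e ∘ Gᶜ.connectedComponentMk) ⁻¹' {i} = (e.symm i).supp := Set.ext (hmem i)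
  simpa only [hfiber, Function.comp_apply, hmem] using
    compl_connectedComponent_dichotomy h (e.symm i)

theorem P3P1_free_iff_join_decomposition {V : Type} [Fintype V] [Nonempty V]
    (G : SimpleGraph V) :
    InducedFree G P3P1 ↔
      ∃ (n : ℕ) (f : V → Fin n), Function.Surjective f ∧
        (∀ x y : V, f x ≠ f y → G.Adj x y) ∧
        ∀ i : Fin n,
          (∀ s : Set V, s ⊆ f ⁻¹' {i} → _root_.IsIndepSet G s → s.ncard ≤ 2) ∨
          (∀ x y z : V, f x = i → f y = i → f z = i →
            G.Adj x y → G.Adj y z → x ≠ z → G.Adj x z) :=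
  P3P1_free_iff_join_decomposition_general G
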